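/- arXiv:2310.02891 — 2 statements merged into one kernel-verified Lean document; each statement's English description precedes it below -/
import Mathlib

section
/- Fix γ > 0 and let (ψ_t)_{t>0} be a family of measurable kernels in the class P_γ on M. For f ∈ L¹(M,μ) define K_t f(x) = ∫_M ψ_t(x,y) f(y) dμ(y), set M_f = ∫_M f dμ, and fix a base point x₀ ∈ M. Then for every p ∈ (1,∞), with p' the Hölder conjugate of p, one has ( ∫_M |K_t f(x) − M_f ψ_t(x,x₀)|^p · V(x, t^{1/γ})^{p/p'} dμ(x) )^{1/p} → 0 as t → +∞. -/
open MeasureTheory Metric Real Filter Topology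

/-!
Write `D_t = K_t f - M_f ψ_t(·, x₀)` and `V_t(x) = V(x, t^{1/γ})`. As `p / p' = p - 1`, the integrand
is `(V_t |D_t|)^{p-1} |D_t|`. Symmetry and unit mass of the kernels give `‖D_t‖₁ ≤ 2 ‖f‖₁` by Fubini,
so it suffices that `V_t |D_t| → 0` uniformly. Since `D_t(x) = ∫ (ψ_t(x,y) - ψ_t(x,x₀)) f(y) dμ(y)`,
the part of this integral over a ball around `x₀` is small for large `t` by (P4), and the rest,
uniformly in `t`, by the bound `V_t ψ_t ≤ C` from (P2) and the integrability of `f` once the ball is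
large.
-/

theorem sigmaFinite_of_measure_ball_lt_top {X : Type*} [PseudoMetricSpace X] [MeasurableSpace X]
    {μ : Measure X} (x₀ : X) (h : ∀ r : ℝ, 0 < r → μ (ball x₀ r) < ⊤) : SigmaFinite μ :=
  ⟨⟨⟨fun n => ball x₀ (n + 1), fun _ => trivial, fun n => h _ (by positivity),
    iUnion_ball_nat_succ x₀⟩⟩⟩

theorem MeasureTheory.Integrable.tendsto_setIntegral_compl_ball {X E : Type*} [PseudoMetricSpace X]
    [MeasurableSpace X] [OpensMeasurableSpace X] [NormedAddCommGroup E] [NormedSpace ℝ E]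
    {μ : Measure X} {f : X → E} (hf : Integrable f μ) (x₀ : X) :
    Tendsto (fun R : ℝ => ∫ y in (ball x₀ R)ᶜ, f y ∂μ) atTop (𝓝 0) := by
  have hanti : Antitone fun R : ℝ => (ball x₀ R)ᶜ :=
    fun _ _ h => Set.compl_subset_compl.2 (ball_subset_ball h)
  have hempty : ⋂ R : ℝ, (ball x₀ R)ᶜ = ∅ :=
    Set.eq_empty_of_forall_notMem fun y hy =>
      Set.mem_iInter.1 hy (dist y x₀ + 1) (mem_ball.2 (lt_add_one _))
  simpa [hempty] using
    tendsto_setIntegral_of_antitone (fun _ => measurableSet_ball.compl) hanti ⟨0, hf.integrableOn⟩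

theorem mul_le_of_le_mul_ciSup {ι : Type*} {φ : ι → ℝ} {v c C : ℝ} (hc : 0 < c) (hv : 0 ≤ v)
    (hlow : c ≤ v * ⨆ i, φ i) (hup : v * ⨆ i, φ i ≤ C) (i : ι) : v * φ i ≤ C := by
  have hbdd : BddAbove (Set.range φ) := by
    by_contra h
    rw [Real.iSup_of_not_bddAbove h, mul_zero] at hlow
    exact hlow.not_gt hc
  exact (mul_le_mul_of_nonneg_left (le_ciSup hbdd i) hv).trans hup

theorem rpow_mul_rpow_sub_one_le {a v ε p : ℝ} (ha : 0 ≤ a) (hv : 0 ≤ v) (hp : 1 ≤ p)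
    (h : v * a ≤ ε) : a ^ p * v ^ (p - 1) ≤ ε ^ (p - 1) * a := by
  have hap : a ^ p = a ^ (p - 1) * a := by
    rw [← rpow_add_one' ha (by linarith : (0 : ℝ) < p - 1 + 1).ne', sub_add_cancel]
  calc a ^ p * v ^ (p - 1) = (v * a) ^ (p - 1) * a := by rw [mul_rpow hv ha, hap]; ring
    _ ≤ ε ^ (p - 1) * a := by gcongr

theorem tendsto_integral_rpow_mul_rpow_sub_one {ι X : Type*} [MeasurableSpace X] {μ : Measure X}
    {l : Filter ι} {D V : ι → X → ℝ} {B p : ℝ} (hp : 1 < p)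
    (hD : ∀ᶠ i in l, Integrable (D i) μ) (hDB : ∀ᶠ i in l, ∫ x, |D i x| ∂μ ≤ B)
    (hV : ∀ i x, 0 ≤ V i x) (hsmall : ∀ ε : ℝ, 0 < ε → ∀ᶠ i in l, ∀ x, V i x * |D i x| ≤ ε) :
    Tendsto (fun i => (∫ x, |D i x| ^ p * V i x ^ (p - 1) ∂μ) ^ (1 / p)) l (𝓝 0) := by
  have hp1 : 0 < p - 1 := sub_pos.2 hp
  suffices h : Tendsto (fun i => ∫ x, |D i x| ^ p * V i x ^ (p - 1) ∂μ) l (𝓝 0) by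
    have h' := h.rpow_const (p := 1 / p) (Or.inr (by positivity))
    rwa [zero_rpow (by positivity)] at h'
  have hlim : Tendsto (fun ε : ℝ => ε ^ (p - 1) * B) (𝓝[>] 0) (𝓝 0) := by
    simpa [zero_rpow hp1.ne'] using
      ((continuousAt_rpow_const 0 (p - 1) (Or.inr hp1.le)).tendsto.mul_const B).mono_left
        nhdsWithin_le_nhds
  refine tendsto_order.2 ⟨fun a ha => Eventually.of_forall fun i => ha.trans_le ?_, fun a ha => ?_⟩
  · exact integral_nonneg fun x => mul_nonneg (rpow_nonneg (abs_nonneg _) _)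
      (rpow_nonneg (hV i x) _)
  obtain ⟨ε, hεa, hε⟩ := ((hlim.eventually (gt_mem_nhds ha)).and self_mem_nhdsWithin).exists
  filter_upwards [hD, hDB, hsmall ε hε] with i hDi hDBi hsmalli
  calc ∫ x, |D i x| ^ p * V i x ^ (p - 1) ∂μ ≤ ∫ x, ε ^ (p - 1) * |D i x| ∂μ :=
        integral_mono_of_nonneg
          (Eventually.of_forall fun x => mul_nonneg (rpow_nonneg (abs_nonneg _) _)
            (rpow_nonneg (hV i x) _))
          (hDi.abs.const_mul _)
          (Eventually.of_forall fun x =>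
            rpow_mul_rpow_sub_one_le (abs_nonneg _) (hV i x) hp.le (hsmalli x))
    _ = ε ^ (p - 1) * ∫ x, |D i x| ∂μ := integral_const_mul _ _
    _ ≤ ε ^ (p - 1) * B := mul_le_mul_of_nonneg_left hDBi (rpow_nonneg (le_of_lt hε) _)
    _ < a := hεa

theorem abs_integral_mul_sub_le {X : Type*} [MeasurableSpace X] {μ : Measure X} {φ g : X → ℝ}
    {A δ : ℝ} {S : Set X} {z : X} (hS : MeasurableSet S) (hφ : AEStronglyMeasurable φ μ)
    (hφA : ∀ y, |φ y| ≤ A) (hφS : ∀ y ∈ S, |φ y - φ z| ≤ δ) (hg : Integrable g μ) :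
    |∫ y, φ y * g y ∂μ - (∫ y, g y ∂μ) * φ z| ≤
      δ * ∫ y in S, |g y| ∂μ + 2 * A * ∫ y in Sᶜ, |g y| ∂μ := by
  have hosc : ∀ y, |φ y - φ z| ≤ 2 * A := fun y =>
    (abs_sub _ _).trans (by linarith [hφA y, hφA z])
  have hint : Integrable (fun y => |φ y - φ z| * |g y|) μ :=
    hg.abs.bdd_mul (hφ.sub aestronglyMeasurable_const).norm
      (Eventually.of_forall fun y => by simpa using hosc y)
  have hrep : ∫ y, φ y * g y ∂μ - (∫ y, g y ∂μ) * φ z = ∫ y, (φ y - φ z) * g y ∂μ := by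
    simp only [sub_mul]
    rw [integral_sub (hg.bdd_mul hφ (Eventually.of_forall fun y => (hφA y).trans_eq' rfl))
      (hg.const_mul _), integral_const_mul]
    ring
  have hnear : ∫ y in S, |φ y - φ z| * |g y| ∂μ ≤ δ * ∫ y in S, |g y| ∂μ := by
    rw [← integral_const_mul]
    exact setIntegral_mono_on hint.integrableOn (hg.abs.const_mul δ).integrableOn hS
      fun y hy => mul_le_mul_of_nonneg_right (hφS y hy) (abs_nonneg _)
  have hfar : ∫ y in Sᶜ, |φ y - φ z| * |g y| ∂μ ≤ 2 * A * ∫ y in Sᶜ, |g y| ∂μ := by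
    rw [← integral_const_mul]
    exact setIntegral_mono_on hint.integrableOn (hg.abs.const_mul _).integrableOn hS.compl
      fun y _ => mul_le_mul_of_nonneg_right (hosc y) (abs_nonneg _)
  calc |∫ y, φ y * g y ∂μ - (∫ y, g y ∂μ) * φ z|
      ≤ ∫ y, |φ y - φ z| * |g y| ∂μ := by
        rw [hrep]; exact abs_integral_le_integral_abs.trans_eq (by simp only [abs_mul])
    _ = ∫ y in S, |φ y - φ z| * |g y| ∂μ + ∫ y in Sᶜ, |φ y - φ z| * |g y| ∂μ :=
        (integral_add_compl hS hint).symm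
    _ ≤ _ := add_le_add hnear hfar

section Kernel

variable {X : Type*} [MeasurableSpace X] {μ : Measure X} {k : X → X → ℝ} {g : X → ℝ}

theorem integrable_kernel_left (hcol : ∀ y, ∫ x, k x y ∂μ = 1) (y : X) :
    Integrable (fun x => k x y) μ :=
  .of_integral_ne_zero (by simp [hcol y])

theorem integrable_prod_kernel_mul [SFinite μ] (hk : Measurable (Function.uncurry k))
    (hk0 : ∀ x y, 0 ≤ k x y) (hcol : ∀ y, ∫ x, k x y ∂μ = 1) (hg : Integrable g μ) :
    Integrable (fun q : X × X => k q.1 q.2 * g q.2) (μ.prod μ) := by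
  refine (integrable_prod_iff' (f := fun q : X × X => k q.1 q.2 * g q.2)
    (hk.aestronglyMeasurable.mul hg.1.comp_snd)).2 ⟨?_, ?_⟩
  · exact Eventually.of_forall fun y => (integrable_kernel_left hcol y).mul_const (g y)
  · have hnorm : (fun y => ∫ x, ‖k x y * g y‖ ∂μ) = fun y => ‖g y‖ := by
      ext y
      simp only [norm_mul, Real.norm_of_nonneg (hk0 _ y), integral_mul_const, hcol y, one_mul]
    simpa only [hnorm] using hg.norm

theorem integral_integral_kernel_mul [SFinite μ] (hk : Measurable (Function.uncurry k))
    (hk0 : ∀ x y, 0 ≤ k x y) (hcol : ∀ y, ∫ x, k x y ∂μ = 1) (hg : Integrable g μ) :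
    ∫ x, ∫ y, k x y * g y ∂μ ∂μ = ∫ y, g y ∂μ := by
  rw [integral_integral_swap (integrable_prod_kernel_mul hk hk0 hcol hg)]
  simp only [integral_mul_const, hcol, one_mul]

theorem integrable_kernel_mul_sub [SFinite μ] (hk : Measurable (Function.uncurry k))
    (hk0 : ∀ x y, 0 ≤ k x y) (hcol : ∀ y, ∫ x, k x y ∂μ = 1) (hg : Integrable g μ) (x₀ : X) :
    Integrable (fun x => ∫ y, k x y * g y ∂μ - (∫ y, g y ∂μ) * k x x₀) μ :=
  (integrable_prod_kernel_mul hk hk0 hcol hg).integral_prod_left.sub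
    ((integrable_kernel_left hcol x₀).const_mul _)

theorem integral_abs_kernel_mul_sub_le [SFinite μ] (hk : Measurable (Function.uncurry k))
    (hk0 : ∀ x y, 0 ≤ k x y) (hcol : ∀ y, ∫ x, k x y ∂μ = 1) (hg : Integrable g μ) (x₀ : X) :
    ∫ x, |∫ y, k x y * g y ∂μ - (∫ y, g y ∂μ) * k x x₀| ∂μ ≤ 2 * ∫ y, |g y| ∂μ := by
  have hmaj : ∀ x, |∫ y, k x y * g y ∂μ - (∫ y, g y ∂μ) * k x x₀| ≤
      ∫ y, k x y * |g y| ∂μ + |∫ y, g y ∂μ| * k x x₀ := fun x =>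
    (abs_sub _ _).trans <| add_le_add
      (abs_integral_le_integral_abs.trans_eq (by simp only [abs_mul, abs_of_nonneg (hk0 x _)]))
      (by rw [abs_mul, abs_of_nonneg (hk0 x x₀)])
  have hmaj_int : Integrable (fun x => ∫ y, k x y * |g y| ∂μ + |∫ y, g y ∂μ| * k x x₀) μ :=
    (integrable_prod_kernel_mul hk hk0 hcol hg.abs).integral_prod_left.add
      ((integrable_kernel_left hcol x₀).const_mul _)
  calc ∫ x, |∫ y, k x y * g y ∂μ - (∫ y, g y ∂μ) * k x x₀| ∂μ
      ≤ ∫ x, (∫ y, k x y * |g y| ∂μ + |∫ y, g y ∂μ| * k x x₀) ∂μ :=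
        integral_mono (integrable_kernel_mul_sub hk hk0 hcol hg x₀).abs hmaj_int hmaj
    _ = ∫ y, |g y| ∂μ + |∫ y, g y ∂μ| := by
        rw [integral_add (integrable_prod_kernel_mul hk hk0 hcol hg.abs).integral_prod_left
          ((integrable_kernel_left hcol x₀).const_mul _), integral_const_mul,
          integral_integral_kernel_mul hk hk0 hcol hg.abs, hcol, mul_one]
    _ ≤ 2 * ∫ y, |g y| ∂μ := by linarith [abs_integral_le_integral_abs (f := g) (μ := μ)]

end Kernel

section WeightedKernels

variable {M : Type*} [PseudoMetricSpace M] {ψ : ℝ → M → M → ℝ} {V : ℝ → M → ℝ} {C : ℝ} {x₀ : M}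

theorem eventually_mul_abs_sub_le_of_rpow_decay (hV : ∀ t x, 0 ≤ V t x)
    (hVψ : ∀ t, 0 < t → ∀ x y, V t x * |ψ t x y| ≤ C)
    (hdecay : ∃ θ : ℝ, 0 < θ ∧ ∀ ξ : ℝ, 0 < ξ → ∃ Cξ t₀ : ℝ, 0 < Cξ ∧ 0 < t₀ ∧
        ∀ t : ℝ, t₀ < t → ∀ x x₀ y : M, dist x₀ y ≤ ξ →
          |ψ t x x₀ - ψ t x y| ≤ Cξ * t ^ (-θ) * ψ t x x₀)
    {ξ η : ℝ} (hξ : 0 < ξ) (hη : 0 < η) :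
    ∀ᶠ t in atTop, ∀ x y, dist x₀ y ≤ ξ → V t x * |ψ t x x₀ - ψ t x y| ≤ η := by
  obtain ⟨θ, hθ, hdecay⟩ := hdecay
  obtain ⟨Cξ, t₀, hCξ, ht₀, hosc⟩ := hdecay ξ hξ
  have hlim : Tendsto (fun t : ℝ => Cξ * t ^ (-θ) * C) atTop (𝓝 0) := by
    simpa using ((tendsto_rpow_neg_atTop hθ).const_mul Cξ).mul_const C
  filter_upwards [hlim.eventually (ge_mem_nhds hη), eventually_gt_atTop t₀] with t hCη ht x y hy
  have ht0 : 0 < t := ht₀.trans ht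
  calc V t x * |ψ t x x₀ - ψ t x y| ≤ V t x * (Cξ * t ^ (-θ) * ψ t x x₀) :=
        mul_le_mul_of_nonneg_left (hosc t ht x x₀ y hy) (hV t x)
    _ = Cξ * t ^ (-θ) * (V t x * ψ t x x₀) := by ring
    _ ≤ Cξ * t ^ (-θ) * C := by
        gcongr
        exact (mul_le_mul_of_nonneg_left (le_abs_self _) (hV t x)).trans (hVψ t ht0 x x₀)
    _ ≤ η := hCη

variable [MeasurableSpace M] [OpensMeasurableSpace M] {μ : Measure M} {g : M → ℝ}

theorem eventually_mul_abs_kernel_mul_sub_le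
    (hψ : ∀ t, 0 < t → ∀ x, AEStronglyMeasurable (ψ t x) μ) (hV : ∀ t x, 0 ≤ V t x)
    (hVψ : ∀ t, 0 < t → ∀ x y, V t x * |ψ t x y| ≤ C)
    (hosc : ∀ ξ η : ℝ, 0 < ξ → 0 < η →
      ∀ᶠ t in atTop, ∀ x y, dist x₀ y ≤ ξ → V t x * |ψ t x x₀ - ψ t x y| ≤ η)
    (hg : Integrable g μ) {ε : ℝ} (hε : 0 < ε) :
    ∀ᶠ t in atTop, ∀ x, V t x * |∫ y, ψ t x y * g y ∂μ - (∫ y, g y ∂μ) * ψ t x x₀| ≤ ε := by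
  have htail : Tendsto (fun R : ℝ => 2 * C * ∫ y in (ball x₀ R)ᶜ, |g y| ∂μ) atTop (𝓝 0) := by
    simpa using (hg.abs.tendsto_setIntegral_compl_ball x₀).const_mul (2 * C)
  obtain ⟨R, hR, hR0⟩ :=
    ((htail.eventually (gt_mem_nhds (half_pos hε))).and (eventually_gt_atTop 0)).exists
  have hg0 : 0 ≤ ∫ y, |g y| ∂μ := integral_nonneg fun _ => abs_nonneg _
  set η := ε / (2 * (∫ y, |g y| ∂μ + 1)) with hη_def
  have hη : 0 < η := by positivity
  have hηg : η * ∫ y, |g y| ∂μ < ε / 2 := by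
    rw [hη_def, div_mul_eq_mul_div, div_lt_div_iff₀ (by positivity) two_pos]
    nlinarith
  filter_upwards [hosc R η hR0 hη, eventually_gt_atTop 0] with t hosc_t ht x
  have hweighted := abs_integral_mul_sub_le (φ := fun y => V t x * ψ t x y) (A := C) (δ := η)
    (z := x₀) measurableSet_ball ((hψ t ht x).const_mul _)
    (fun y => by rw [abs_mul, abs_of_nonneg (hV t x)]; exact hVψ t ht x y)
    (fun y hy => by
      rw [← mul_sub, abs_mul, abs_of_nonneg (hV t x), abs_sub_comm]
      exact hosc_t x y (dist_comm y x₀ ▸ (mem_ball.1 hy).le))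
    hg
  calc V t x * |∫ y, ψ t x y * g y ∂μ - (∫ y, g y ∂μ) * ψ t x x₀|
      = |∫ y, V t x * ψ t x y * g y ∂μ - (∫ y, g y ∂μ) * (V t x * ψ t x x₀)| := by
        rw [← abs_of_nonneg (hV t x), ← abs_mul, abs_of_nonneg (hV t x)]
        simp only [mul_assoc, integral_const_mul]
        ring_nf
    _ ≤ η * ∫ y in ball x₀ R, |g y| ∂μ + 2 * C * ∫ y in (ball x₀ R)ᶜ, |g y| ∂μ := hweighted
    _ ≤ η * ∫ y, |g y| ∂μ + 2 * C * ∫ y in (ball x₀ R)ᶜ, |g y| ∂μ := by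
        have := setIntegral_le_integral (s := ball x₀ R) hg.abs
          (Eventually.of_forall fun _ => abs_nonneg _)
        gcongr
    _ ≤ ε := by linarith

end WeightedKernels

theorem stmt_1_general
    {M : Type*} [MetricSpace M] [MeasurableSpace M] [BorelSpace M]
    (μ : Measure M)
    (hVfin : ∀ (x : M) (r : ℝ), 0 < r → μ (ball x r) < ⊤)
    (γ : ℝ)
    (ψ : ℝ → M → M → ℝ)
    (hψmeas : ∀ t : ℝ, 0 < t → Measurable (Function.uncurry (ψ t)))
    -- (P1)
    (hP1 : ∀ t : ℝ, 0 < t → ∀ x y : M, ψ t x y = ψ t y x ∧ 0 < ψ t x y)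
    -- (P2)
    (hP2int : ∀ t : ℝ, 0 < t → ∀ x : M, ∫ y, ψ t x y ∂μ = 1)
    (hP2sup : ∃ c C : ℝ, 0 < c ∧ c ≤ C ∧ ∀ t : ℝ, 0 < t → ∀ x : M,
        c ≤ (μ (ball x (t ^ (1/γ)))).toReal * (⨆ y : M, ψ t x y) ∧
        (μ (ball x (t ^ (1/γ)))).toReal * (⨆ y : M, ψ t x y) ≤ C)
    -- (P4)
    (hP4 : ∃ θ : ℝ, 0 < θ ∧ ∀ ξ : ℝ, 0 < ξ → ∃ Cξ t₀ : ℝ, 0 < Cξ ∧ 0 < t₀ ∧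
        ∀ t : ℝ, t₀ < t → ∀ x x₀ y : M, dist x₀ y ≤ ξ →
          |ψ t x x₀ - ψ t x y| ≤ Cξ * t ^ (-θ) * ψ t x x₀)
    (f : M → ℝ) (hf : Integrable f μ) (x₀ : M)
    (p p' : ℝ) (hp : 1 < p) (hp' : 1/p + 1/p' = 1) :
    Tendsto (fun t : ℝ =>
        (∫ x, |(∫ y, ψ t x y * f y ∂μ) - (∫ y, f y ∂μ) * ψ t x x₀| ^ p *
            ((μ (ball x (t ^ (1/γ)))).toReal) ^ (p/p') ∂μ) ^ (1/p))
      atTop (nhds 0) := by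
  have := sigmaFinite_of_measure_ball_lt_top x₀ (hVfin x₀)
  obtain ⟨c, C, hc, -, hP2⟩ := hP2sup
  have hV : ∀ (t : ℝ) (x : M), 0 ≤ (μ (ball x (t ^ (1/γ)))).toReal :=
    fun _ _ => ENNReal.toReal_nonneg
  have hVψ : ∀ t, 0 < t → ∀ x y, (μ (ball x (t ^ (1/γ)))).toReal * |ψ t x y| ≤ C :=
    fun t ht x y => by
      rw [abs_of_pos (hP1 t ht x y).2]
      exact mul_le_of_le_mul_ciSup hc (hV t x) (hP2 t ht x).1 (hP2 t ht x).2 y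
  have hcol : ∀ t, 0 < t → ∀ y, ∫ x, ψ t x y ∂μ = 1 := fun t ht y => by
    simpa only [(hP1 t ht _ y).1] using hP2int t ht y
  have hψ0 : ∀ t, 0 < t → ∀ x y, 0 ≤ ψ t x y := fun t ht x y => (hP1 t ht x y).2.le
  have hpp' : p / p' = p - 1 := by
    rw [div_eq_mul_one_div, show 1 / p' = 1 - 1 / p by linarith]
    field_simp
  rw [hpp']
  refine tendsto_integral_rpow_mul_rpow_sub_one hp (B := 2 * ∫ y, |f y| ∂μ) ?_ ?_ hV
    fun ε hε => eventually_mul_abs_kernel_mul_sub_le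
      (fun t ht x => ((hψmeas t ht).comp measurable_prodMk_left).aestronglyMeasurable) hV hVψ
      (fun ξ η hξ hη => eventually_mul_abs_sub_le_of_rpow_decay hV hVψ hP4 hξ hη) hf hε
  · filter_upwards [eventually_gt_atTop 0] with t ht
    exact integrable_kernel_mul_sub (hψmeas t ht) (hψ0 t ht) (hcol t ht) hf x₀
  · filter_upwards [eventually_gt_atTop 0] with t ht
    exact integral_abs_kernel_mul_sub_le (hψmeas t ht) (hψ0 t ht) (hcol t ht) hf x₀

/-- `L^p` convergence (with the volume weight) to the fundamental solution,
for kernels in the class `P_γ`, for every `1 < p < ∞` with Hölder conjugate `p'`. -/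
theorem stmt_1
    {M : Type*} [MetricSpace M] [ProperSpace M] [MeasurableSpace M] [BorelSpace M]
    (μ : Measure M)
    (hVpos : ∀ (x : M) (r : ℝ), 0 < r → 0 < μ (ball x r))
    (hVfin : ∀ (x : M) (r : ℝ), 0 < r → μ (ball x r) < ⊤)
    (γ : ℝ) (hγ : 0 < γ)
    (ψ : ℝ → M → M → ℝ)
    (hψmeas : ∀ t : ℝ, 0 < t → Measurable (Function.uncurry (ψ t)))
    -- (P1)
    (hP1 : ∀ t : ℝ, 0 < t → ∀ x y : M, ψ t x y = ψ t y x ∧ 0 < ψ t x y)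
    -- (P2)
    (hP2int : ∀ t : ℝ, 0 < t → ∀ x : M, ∫ y, ψ t x y ∂μ = 1)
    (hP2sup : ∃ c C : ℝ, 0 < c ∧ c ≤ C ∧ ∀ t : ℝ, 0 < t → ∀ x : M,
        c ≤ (μ (ball x (t ^ (1/γ)))).toReal * (⨆ y : M, ψ t x y) ∧
        (μ (ball x (t ^ (1/γ)))).toReal * (⨆ y : M, ψ t x y) ≤ C)
    -- (P3)
    (hP3 : ∃ C : ℝ, 1 ≤ C ∧ ∀ t : ℝ, 0 < t → ∀ x y x₀ : M, dist x₀ y ≤ t ^ (1/γ) →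
        C⁻¹ ≤ ψ t x y / ψ t x x₀ ∧ ψ t x y / ψ t x x₀ ≤ C)
    -- (P4)
    (hP4 : ∃ θ : ℝ, 0 < θ ∧ ∀ ξ : ℝ, 0 < ξ → ∃ Cξ t₀ : ℝ, 0 < Cξ ∧ 0 < t₀ ∧
        ∀ t : ℝ, t₀ < t → ∀ x x₀ y : M, dist x₀ y ≤ ξ →
          |ψ t x x₀ - ψ t x y| ≤ Cξ * t ^ (-θ) * ψ t x x₀)
    (f : M → ℝ) (hf : Integrable f μ) (x₀ : M)
    (p p' : ℝ) (hp : 1 < p) (hp' : 1/p + 1/p' = 1) :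
    Tendsto (fun t : ℝ =>
        (∫ x, |(∫ y, ψ t x y * f y ∂μ) - (∫ y, f y ∂μ) * ψ t x x₀| ^ p *
            ((μ (ball x (t ^ (1/γ)))).toReal) ^ (p/p') ∂μ) ^ (1/p))
      atTop (nhds 0) :=
  stmt_1_general μ hVfin γ ψ hψmeas hP1 hP2int hP2sup hP4 f hf x₀ p p' hp hp'
end

section
/- Let σ ∈ (0,1). There is a constant C ≥ 1 (depending on σ, the Li–Yau constants and the volume comparability constants) such that for all t > 0 and all x, y, z ∈ M with d(y,z) ≤ t: C^{−1} ≤ Q_t^σ(x,y) / Q_t^σ(x,z) ≤ C. -/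
/-!
Write `Q_t^σ(x,y) = c_{σ,t} I_t(x,y)` with `c_{σ,t} > 0`. With `r = t + d(x,y)`, the Li–Yau bounds
make `I_t(x,y)` comparable to the profile `r^{-2σ} / V(y,r)`. For the upper bound the two Gaussian
factors combine into `e^{-a r²/u}`, doubling gives `V(y,√u)⁻¹ ≲ (1 + (r/√u)^ν) V(y,r)⁻¹`, and
`∫₀^∞ e^{-b/u} u^{-1-s} du = Γ(s) b^{-s}`; for the lower bound restrict to `u ∈ [r², 4r²]`, where
every factor of the integrand is bounded below. If `d(y,z) ≤ t`, the radii belonging to `y` and `z`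
differ by a factor at most 2 and `V(z,2r) ≲ V(y,r)`, so the two profiles, hence the two kernels,
are comparable.
-/

open MeasureTheory Metric Real Filter

/-- The kernel subordinated to the heat kernel `h`, arising from the
Caffarelli–Silvestre extension problem:
`Q_t^σ(x,y) = (t^{2σ}/(2^{2σ}Γ(σ))) ∫₀^∞ h_u(x,y) e^{-t²/(4u)} u^{-1-σ} du`. -/
noncomputable def Qker {M : Type*} (h : ℝ → M → M → ℝ) (σ t : ℝ) (x y : M) : ℝ :=
  (t ^ (2*σ) / ((2:ℝ) ^ (2*σ) * Real.Gamma σ)) *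
    ∫ u in Set.Ioi (0:ℝ), h u x y * Real.exp (-(t^2)/(4*u)) * u ^ (-1-σ)

open Set

lemma integral_exp_neg_div_mul_rpow {b s : ℝ} (hb : 0 < b) (hs : 0 < s) :
    IntegrableOn (fun u : ℝ => exp (-b / u) * u ^ (-1 - s)) (Ioi 0) ∧
      ∫ u in Ioi (0:ℝ), exp (-b / u) * u ^ (-1 - s) = Gamma s * b ^ (-s) := by
  -- `u = v⁻¹` turns this into the Gamma integral `∫₀^∞ v^{s-1} e^{-bv} dv`
  set g : ℝ → ℝ := fun v => v ^ (s - 1) * exp (-(b * v))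
  have hg : IntegrableOn g (Ioi 0) := by
    refine (integrableOn_rpow_mul_exp_neg_mul_rpow (s := s - 1) (by linarith) one_pos hb).congr_fun
      (fun v _ => ?_) measurableSet_Ioi
    simp [g, rpow_one]
  have hsubst : EqOn (fun u : ℝ => (|(-1:ℝ)| * u ^ ((-1:ℝ) - 1)) • g (u ^ (-1:ℝ)))
      (fun u => exp (-b / u) * u ^ (-1 - s)) (Ioi 0) := by
    intro u (hu : 0 < u)
    simp only [g, smul_eq_mul, abs_neg, abs_one, one_mul, rpow_neg_one]
    rw [inv_rpow hu.le, ← rpow_neg hu.le, ← mul_assoc, ← rpow_add hu, ← div_eq_mul_inv,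
      neg_div, mul_comm]
    ring_nf
  refine ⟨((integrableOn_Ioi_comp_rpow_iff g (by norm_num)).mpr hg).congr_fun hsubst
    measurableSet_Ioi, ?_⟩
  rw [← setIntegral_congr_fun measurableSet_Ioi hsubst, integral_comp_rpow_Ioi g (by norm_num),
    integral_rpow_mul_exp_neg_mul_Ioi hs hb, one_div, inv_rpow hb.le, ← rpow_neg hb.le, mul_comm]

lemma exp_neg_mul_sq_div_mul_exp_le {a c t D u : ℝ} (ha : 0 ≤ a) (hac : 2 * a ≤ c)
    (ha8 : 8 * a ≤ 1) (hu : 0 < u) :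
    exp (-c * D ^ 2 / u) * exp (-(t ^ 2) / (4 * u)) ≤ exp (-(a * (t + D) ^ 2) / u) := by
  have key : a * (t + D) ^ 2 ≤ c * D ^ 2 + t ^ 2 / 4 := by
    nlinarith [sq_nonneg (t - D), mul_nonneg ha (sq_nonneg (t - D)), sq_nonneg t, sq_nonneg D]
  rw [← exp_add, exp_le_exp]
  have : -c * D ^ 2 / u + -(t ^ 2) / (4 * u) = -(c * D ^ 2 + t ^ 2 / 4) / u := by
    field_simp; ring
  rw [this]
  exact div_le_div_of_nonneg_right (by linarith) hu.le

noncomputable def subordinationIntegral {M : Type*} (h : ℝ → M → M → ℝ) (σ t : ℝ) (x y : M) : ℝ :=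
  ∫ u in Ioi 0, h u x y * exp (-(t ^ 2) / (4 * u)) * u ^ (-1 - σ)

lemma Qker_pos {M : Type*} {h : ℝ → M → M → ℝ} {σ t : ℝ} {x y : M} (ht : 0 < t) (hσ : 0 < σ)
    (hI : 0 < subordinationIntegral h σ t x y) : 0 < Qker h σ t x y := by
  have := Gamma_pos_of_pos hσ
  exact mul_pos (by positivity) hI

lemma Qker_le_mul_Qker {M : Type*} {h : ℝ → M → M → ℝ} {σ t K : ℝ} {x y z : M} (ht : 0 < t)
    (hσ : 0 < σ) (hI : subordinationIntegral h σ t x y ≤ K * subordinationIntegral h σ t x z) :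
    Qker h σ t x y ≤ K * Qker h σ t x z := by
  have := Gamma_pos_of_pos hσ
  rw [Qker, Qker, mul_left_comm]
  exact mul_le_mul_of_nonneg_left hI (by positivity)

section
variable {M : Type*} [MetricSpace M] [MeasurableSpace M] {μ : Measure M} {ν C₀ : ℝ}

lemma inv_measureReal_ball_le {y : M} (hC₀ : 0 ≤ C₀)
    (hV : ∀ r, 0 < r → 0 < μ.real (ball y r))
    (hdoub : ∀ r R, 0 < r → r ≤ R → μ.real (ball y R) ≤ C₀ * (R / r) ^ ν * μ.real (ball y r))
    {r s : ℝ} (hr : 0 < r) (hs : 0 < s) :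
    (μ.real (ball y s))⁻¹ ≤ (1 + C₀ * (r / s) ^ ν) * (μ.real (ball y r))⁻¹ := by
  rw [← div_eq_mul_inv, le_div_iff₀ (hV r hr), inv_mul_le_iff₀ (hV s hs), mul_comm]
  have hpow : 0 ≤ C₀ * (r / s) ^ ν := by positivity
  rcases le_total s r with hsr | hrs
  · nlinarith [hdoub s r hs hsr, hV s hs]
  · have := measureReal_mono (μ := μ) (ball_subset_ball hrs)
      (ENNReal.toReal_pos_iff.1 (hV s hs)).2.ne
    nlinarith [hV s hs]

lemma measureReal_ball_two_mul_le {y z : M} (hν : 0 ≤ ν) (hC₀ : 0 ≤ C₀)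
    (hdoub : ∀ r R, 0 < r → r ≤ R → μ.real (ball z R) ≤ C₀ * (R / r) ^ ν * μ.real (ball z r))
    (hcomp : ∀ r, 0 < r → μ.real (ball z r) ≤ C₀ * (1 + dist z y / r) ^ ν * μ.real (ball y r))
    {r : ℝ} (hr : 0 < r) (hzy : dist z y ≤ r) :
    μ.real (ball z (2 * r)) ≤ (C₀ * 2 ^ ν) ^ 2 * μ.real (ball y r) := by
  have hbase : (1 + dist z y / r) ^ ν ≤ 2 ^ ν :=
    rpow_le_rpow (by positivity) (by linarith [(div_le_one hr).2 hzy]) hν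
  calc μ.real (ball z (2 * r)) ≤ C₀ * 2 ^ ν * μ.real (ball z r) := by
        simpa [mul_div_cancel_right₀ _ hr.ne'] using hdoub r (2 * r) hr (by linarith)
    _ ≤ C₀ * 2 ^ ν * (C₀ * 2 ^ ν * μ.real (ball y r)) := by
        gcongr
        exact (hcomp r hr).trans (by gcongr)
    _ = (C₀ * 2 ^ ν) ^ 2 * μ.real (ball y r) := by ring

noncomputable def kernelProfile (μ : Measure M) (σ t : ℝ) (x y : M) : ℝ :=
  (t + dist x y) ^ (-(2 * σ)) / μ.real (ball y (t + dist x y))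

lemma kernelProfile_pos {σ t : ℝ} {x y : M} (hV : ∀ r, 0 < r → 0 < μ.real (ball y r))
    (ht : 0 < t) : 0 < kernelProfile μ σ t x y := by
  have hr : 0 < t + dist x y := by positivity
  exact div_pos (rpow_pos_of_pos hr _) (hV _ hr)

lemma kernelProfile_le_of_dist_le {σ t : ℝ} {x y z : M} (hσ : 0 ≤ σ) (hν : 0 ≤ ν) (hC₀ : 0 ≤ C₀)
    (hV : ∀ x r, 0 < r → 0 < μ.real (ball x r))
    (hdoub : ∀ x r R, 0 < r → r ≤ R → μ.real (ball x R) ≤ C₀ * (R / r) ^ ν * μ.real (ball x r))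
    (hcomp : ∀ x y r, 0 < r →
      μ.real (ball x r) ≤ C₀ * (1 + dist x y / r) ^ ν * μ.real (ball y r))
    (ht : 0 < t) (hyz : dist y z ≤ t) :
    kernelProfile μ σ t x y ≤ 2 ^ (2 * σ) * (C₀ * 2 ^ ν) ^ 2 * kernelProfile μ σ t x z := by
  set ry := t + dist x y
  set rz := t + dist x z
  have hry : 0 < ry := by positivity
  have hrz : 0 < rz := by positivity
  have hrz_le : rz ≤ 2 * ry := by linarith [dist_triangle x y z, dist_nonneg (x := x) (y := y)]
  have hpow : ry ^ (-(2 * σ)) ≤ 2 ^ (2 * σ) * rz ^ (-(2 * σ)) := by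
    calc ry ^ (-(2 * σ)) ≤ (rz / 2) ^ (-(2 * σ)) :=
          rpow_le_rpow_of_nonpos (by positivity) (by linarith) (by linarith)
      _ = 2 ^ (2 * σ) * rz ^ (-(2 * σ)) := by
          rw [div_rpow hrz.le zero_le_two, rpow_neg zero_le_two, div_inv_eq_mul, mul_comm]
  have hvol : μ.real (ball z rz) ≤ (C₀ * 2 ^ ν) ^ 2 * μ.real (ball y ry) :=
    (measureReal_mono (ball_subset_ball hrz_le)
      (ENNReal.toReal_pos_iff.1 (hV z _ (by positivity))).2.ne).trans
      (measureReal_ball_two_mul_le hν hC₀ (hdoub z) (hcomp z y) hry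
        (by rw [dist_comm]; linarith [dist_nonneg (x := x) (y := y)]))
  have hVy := hV y ry hry
  have hVz := hV z rz hrz
  unfold kernelProfile
  rw [div_le_iff₀ hVy, mul_div_assoc', div_mul_eq_mul_div, le_div_iff₀ hVz]
  nlinarith [mul_le_mul hpow hvol measureReal_nonneg (by positivity)]

lemma subordinationIntegrand_le {h : ℝ → M → M → ℝ} {σ t a c₂ C₂ u : ℝ} {x y : M} (ht : 0 < t)
    (hC₀ : 0 ≤ C₀) (ha : 0 ≤ a) (hac : 2 * a ≤ c₂) (ha8 : 8 * a ≤ 1) (hC₂ : 0 ≤ C₂)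
    (hV : ∀ r, 0 < r → 0 < μ.real (ball y r))
    (hdoub : ∀ r R, 0 < r → r ≤ R → μ.real (ball y R) ≤ C₀ * (R / r) ^ ν * μ.real (ball y r))
    (hu : 0 < u) (hup : h u x y ≤ C₂ / μ.real (ball y √u) * exp (-c₂ * dist x y ^ 2 / u)) :
    h u x y * exp (-(t ^ 2) / (4 * u)) * u ^ (-1 - σ) ≤
      C₂ / μ.real (ball y (t + dist x y)) *
        (exp (-(a * (t + dist x y) ^ 2) / u) * u ^ (-1 - σ) + C₀ * (t + dist x y) ^ ν *
          (exp (-(a * (t + dist x y) ^ 2) / u) * u ^ (-1 - (σ + ν / 2)))) := by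
  set r := t + dist x y
  set V := μ.real (ball y r)
  have hr : 0 < r := by positivity
  have hvol := inv_measureReal_ball_le hC₀ hV hdoub hr (sqrt_pos.2 hu)
  have hsplit : (r / √u) ^ ν * u ^ (-1 - σ) = r ^ ν * u ^ (-1 - (σ + ν / 2)) := by
    rw [div_rpow hr.le (sqrt_nonneg u), sqrt_eq_rpow, ← rpow_mul hu.le, div_eq_mul_inv,
      ← rpow_neg hu.le, mul_assoc, ← rpow_add hu]
    congr 2
    ring
  calc h u x y * exp (-(t ^ 2) / (4 * u)) * u ^ (-1 - σ)
      ≤ C₂ / μ.real (ball y √u) * exp (-c₂ * dist x y ^ 2 / u) *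
          exp (-(t ^ 2) / (4 * u)) * u ^ (-1 - σ) := by gcongr
    _ ≤ C₂ * (μ.real (ball y √u))⁻¹ * exp (-(a * r ^ 2) / u) * u ^ (-1 - σ) := by
        rw [div_eq_mul_inv, mul_assoc (C₂ * _)]
        gcongr
        exact exp_neg_mul_sq_div_mul_exp_le ha hac ha8 hu
    _ ≤ C₂ * ((1 + C₀ * (r / √u) ^ ν) * V⁻¹) * exp (-(a * r ^ 2) / u) * u ^ (-1 - σ) := by
        gcongr
    _ = _ := by linear_combination C₂ * V⁻¹ * C₀ * exp (-(a * r ^ 2) / u) * hsplit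

lemma subordinationIntegral_le {h : ℝ → M → M → ℝ} {σ t a c₂ C₂ : ℝ} {x y : M} (hσ : 0 < σ)
    (ht : 0 < t) (hν : 0 ≤ ν) (hC₀ : 0 ≤ C₀) (ha : 0 < a) (hac : 2 * a ≤ c₂) (ha8 : 8 * a ≤ 1)
    (hC₂ : 0 ≤ C₂) (hV : ∀ r, 0 < r → 0 < μ.real (ball y r))
    (hdoub : ∀ r R, 0 < r → r ≤ R → μ.real (ball y R) ≤ C₀ * (R / r) ^ ν * μ.real (ball y r))
    (hmeas : Measurable fun u => h u x y) (hnonneg : ∀ u, 0 < u → 0 ≤ h u x y)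
    (hup : ∀ u, 0 < u → h u x y ≤ C₂ / μ.real (ball y √u) * exp (-c₂ * dist x y ^ 2 / u)) :
    IntegrableOn (fun u => h u x y * exp (-(t ^ 2) / (4 * u)) * u ^ (-1 - σ)) (Ioi 0) ∧
      subordinationIntegral h σ t x y ≤
        C₂ * (Gamma σ * a ^ (-σ) + C₀ * Gamma (σ + ν / 2) * a ^ (-(σ + ν / 2))) *
          kernelProfile μ σ t x y := by
  set r := t + dist x y
  set V := μ.real (ball y r)
  set b := a * r ^ 2
  set s := σ + ν / 2
  have hr : 0 < r := by positivity
  have hb : 0 < b := by positivity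
  obtain ⟨hint₁, hI₁⟩ := integral_exp_neg_div_mul_rpow hb hσ
  obtain ⟨hint₂, hI₂⟩ := integral_exp_neg_div_mul_rpow hb (by positivity : 0 < s)
  set f := fun u => h u x y * exp (-(t ^ 2) / (4 * u)) * u ^ (-1 - σ)
  set g := fun u => C₂ / V * (exp (-b / u) * u ^ (-1 - σ) +
    C₀ * r ^ ν * (exp (-b / u) * u ^ (-1 - s)))
  have hg : IntegrableOn g (Ioi 0) := (hint₁.add (hint₂.const_mul _)).const_mul _
  have hfg : ∀ u ∈ Ioi (0:ℝ), f u ≤ g u := fun u hu =>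
    subordinationIntegrand_le ht hC₀ ha.le hac ha8 hC₂ hV hdoub hu (hup u hu)
  have hf : IntegrableOn f (Ioi 0) := by
    refine hg.mono' (by fun_prop) ?_
    filter_upwards [ae_restrict_mem measurableSet_Ioi] with u (hu : 0 < u)
    rw [norm_of_nonneg (by have := hnonneg u hu; positivity)]
    exact hfg u hu
  refine ⟨hf, ?_⟩
  have hb_rpow : ∀ p : ℝ, b ^ (-p) = a ^ (-p) * r ^ (-(2 * p)) := fun p => by
    rw [mul_rpow ha.le (sq_nonneg r), ← rpow_natCast, ← rpow_mul hr.le]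
    ring_nf
  have hr_rpow : r ^ ν * r ^ (-(2 * s)) = r ^ (-(2 * σ)) := by
    rw [← rpow_add hr]
    congr 1
    ring
  calc subordinationIntegral h σ t x y ≤ ∫ u in Ioi 0, g u :=
        setIntegral_mono_on hf hg measurableSet_Ioi hfg
    _ = C₂ / V * (Gamma σ * b ^ (-σ) + C₀ * r ^ ν * (Gamma s * b ^ (-s))) := by
        rw [integral_const_mul, integral_add hint₁ (hint₂.const_mul _), integral_const_mul, hI₁,
          hI₂]
    _ = _ := by
        rw [hb_rpow, hb_rpow, kernelProfile, ← hr_rpow]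
        ring

lemma le_subordinationIntegrand {h : ℝ → M → M → ℝ} {σ t c₁ C₁ u : ℝ} {x y : M} (hσ : 0 ≤ σ)
    (ht : 0 < t) (hc₁ : 0 ≤ c₁) (hC₁ : 0 ≤ C₁) (hV : ∀ r, 0 < r → 0 < μ.real (ball y r))
    (hdoub : ∀ r R, 0 < r → r ≤ R → μ.real (ball y R) ≤ C₀ * (R / r) ^ ν * μ.real (ball y r))
    (hu₁ : (t + dist x y) ^ 2 ≤ u) (hu₂ : u ≤ 4 * (t + dist x y) ^ 2)
    (hlow : c₁ / μ.real (ball y √u) * exp (-C₁ * dist x y ^ 2 / u) ≤ h u x y) :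
    c₁ / (C₀ * 2 ^ ν * μ.real (ball y (t + dist x y))) * exp (-C₁) * exp (-4⁻¹) *
        (4 * (t + dist x y) ^ 2) ^ (-1 - σ) ≤
      h u x y * exp (-(t ^ 2) / (4 * u)) * u ^ (-1 - σ) := by
  set D := dist x y
  set r := t + D
  have hr : 0 < r := by positivity
  have hu : 0 < u := lt_of_lt_of_le (by positivity) hu₁
  have hsqrt : √u ≤ 2 * r := by
    rw [sqrt_le_left (by positivity)]; linarith
  have hvol : μ.real (ball y √u) ≤ C₀ * 2 ^ ν * μ.real (ball y r) :=
    (measureReal_mono (ball_subset_ball hsqrt)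
      (ENNReal.toReal_pos_iff.1 (hV _ (by positivity))).2.ne).trans
      (by simpa [mul_div_cancel_right₀ _ hr.ne'] using hdoub r (2 * r) hr (by linarith))
  have hD : D ^ 2 ≤ u := by nlinarith [dist_nonneg (x := x) (y := y)]
  have ht2 : t ^ 2 ≤ u := by nlinarith [dist_nonneg (x := x) (y := y)]
  calc c₁ / (C₀ * 2 ^ ν * μ.real (ball y r)) * exp (-C₁) * exp (-4⁻¹) * (4 * r ^ 2) ^ (-1 - σ)
      ≤ c₁ / μ.real (ball y √u) * exp (-C₁ * D ^ 2 / u) * exp (-(t ^ 2) / (4 * u)) *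
          u ^ (-1 - σ) := by
        refine mul_le_mul ?_ (rpow_le_rpow_of_nonpos hu hu₂ (by linarith)) (by positivity)
          (by positivity)
        gcongr
        · exact hV _ (sqrt_pos.2 hu)
        · rw [neg_mul, neg_div, neg_le_neg_iff, div_le_iff₀ hu]
          nlinarith
        · rw [neg_div, neg_le_neg_iff, div_le_iff₀ (by positivity)]
          linarith
    _ ≤ h u x y * exp (-(t ^ 2) / (4 * u)) * u ^ (-1 - σ) := by gcongr

lemma le_subordinationIntegral {h : ℝ → M → M → ℝ} {σ t c₁ C₁ : ℝ} {x y : M} (hσ : 0 ≤ σ)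
    (ht : 0 < t) (hc₁ : 0 ≤ c₁) (hC₁ : 0 ≤ C₁) (hV : ∀ r, 0 < r → 0 < μ.real (ball y r))
    (hdoub : ∀ r R, 0 < r → r ≤ R → μ.real (ball y R) ≤ C₀ * (R / r) ^ ν * μ.real (ball y r))
    (hint : IntegrableOn (fun u => h u x y * exp (-(t ^ 2) / (4 * u)) * u ^ (-1 - σ)) (Ioi 0))
    (hlow : ∀ u, 0 < u → c₁ / μ.real (ball y √u) * exp (-C₁ * dist x y ^ 2 / u) ≤ h u x y) :
    c₁ * exp (-C₁ - 4⁻¹) * (3 * 4 ^ (-1 - σ)) / (C₀ * 2 ^ ν) * kernelProfile μ σ t x y ≤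
      subordinationIntegral h σ t x y := by
  set D := dist x y
  set r := t + D
  set V := μ.real (ball y r)
  have hr : 0 < r := by positivity
  set f := fun u => h u x y * exp (-(t ^ 2) / (4 * u)) * u ^ (-1 - σ)
  have hsub : Icc (r ^ 2) (4 * r ^ 2) ⊆ Ioi 0 := fun u hu => lt_of_lt_of_le (by positivity) hu.1
  have hf0 : ∀ u ∈ Ioi (0:ℝ), 0 ≤ f u := fun u (hu : 0 < u) => by
    have := (hlow u hu).trans' (by positivity)
    positivity
  set m := c₁ / (C₀ * 2 ^ ν * V) * exp (-C₁) * exp (-4⁻¹) * (4 * r ^ 2) ^ (-1 - σ)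
  have hm : ∀ u ∈ Icc (r ^ 2) (4 * r ^ 2), m ≤ f u := fun u ⟨hu₁, hu₂⟩ =>
    le_subordinationIntegrand hσ ht hc₁ hC₁ hV hdoub hu₁ hu₂ (hlow u (hsub ⟨hu₁, hu₂⟩))
  have hr_rpow : (r ^ 2) ^ (-1 - σ) * r ^ 2 = r ^ (-(2 * σ)) := by
    rw [← rpow_add_one (by positivity), ← rpow_natCast, ← rpow_mul hr.le]
    congr 1
    push_cast
    ring
  calc c₁ * exp (-C₁ - 4⁻¹) * (3 * 4 ^ (-1 - σ)) / (C₀ * 2 ^ ν) * kernelProfile μ σ t x y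
      = m * volume.real (Icc (r ^ 2) (4 * r ^ 2)) := by
        rw [volume_real_Icc_of_le (by nlinarith), kernelProfile, ← hr_rpow, sub_eq_add_neg, exp_add]
        simp only [m, V, r, D]
        rw [mul_rpow (by norm_num) (sq_nonneg _)]
        field_simp
        norm_num
    _ ≤ ∫ u in Icc (r ^ 2) (4 * r ^ 2), f u :=
        setIntegral_ge_of_const_le_real measurableSet_Icc (by simp) hm (hint.mono_set hsub)
    _ ≤ subordinationIntegral h σ t x y :=
        setIntegral_mono_set hint ((ae_restrict_iff' measurableSet_Ioi).2 (ae_of_all _ hf0))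
          hsub.eventuallyLE

lemma subordinationIntegral_comparable (h : ℝ → M → M → ℝ) {σ c₁ C₁ c₂ C₂ : ℝ} (hσ : 0 < σ)
    (hν : 0 ≤ ν) (hC₀ : 0 < C₀) (hc₁ : 0 < c₁) (hC₁ : 0 ≤ C₁) (hc₂ : 0 < c₂) (hC₂ : 0 ≤ C₂)
    (hV : ∀ x r, 0 < r → 0 < μ.real (ball x r))
    (hdoub : ∀ x r R, 0 < r → r ≤ R → μ.real (ball x R) ≤ C₀ * (R / r) ^ ν * μ.real (ball x r))
    (hmeas : ∀ x y : M, Measurable fun u => h u x y)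
    (hLY : ∀ u, 0 < u → ∀ x y : M,
      c₁ / μ.real (ball y √u) * exp (-C₁ * dist x y ^ 2 / u) ≤ h u x y ∧
      h u x y ≤ C₂ / μ.real (ball y √u) * exp (-c₂ * dist x y ^ 2 / u)) :
    ∃ K₁ K₂ : ℝ, 0 < K₁ ∧ 0 ≤ K₂ ∧ ∀ t, 0 < t → ∀ x y : M,
      K₁ * kernelProfile μ σ t x y ≤ subordinationIntegral h σ t x y ∧
      subordinationIntegral h σ t x y ≤ K₂ * kernelProfile μ σ t x y := by
  set a := min (c₂ / 2) 8⁻¹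
  have ha : 0 < a := lt_min (by positivity) (by norm_num)
  have hac : a ≤ c₂ / 2 := min_le_left _ _
  have ha8 : a ≤ 8⁻¹ := min_le_right _ _
  have hΓ := Gamma_pos_of_pos hσ
  have hΓ' := Gamma_pos_of_pos (by positivity : 0 < σ + ν / 2)
  refine ⟨c₁ * exp (-C₁ - 4⁻¹) * (3 * 4 ^ (-1 - σ)) / (C₀ * 2 ^ ν),
    C₂ * (Gamma σ * a ^ (-σ) + C₀ * Gamma (σ + ν / 2) * a ^ (-(σ + ν / 2))),
    by positivity, by positivity, fun t ht x y => ?_⟩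
  obtain ⟨hint, hup⟩ := subordinationIntegral_le hσ ht hν hC₀.le ha (by linarith) (by linarith)
    hC₂ (hV y) (hdoub y) (hmeas x y) (fun u hu => (hLY u hu x y).1.trans' (by positivity))
    (fun u hu => (hLY u hu x y).2)
  exact ⟨le_subordinationIntegral hσ.le ht hc₁.le hC₁ (hV y) (hdoub y) hint
    (fun u hu => (hLY u hu x y).1), hup⟩

end

lemma inv_le_div_and_div_le_of_le_mul {a b C : ℝ} (hb : 0 < b) (hC : 0 < C) (hab : a ≤ C * b)
    (hba : b ≤ C * a) : C⁻¹ ≤ a / b ∧ a / b ≤ C :=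
  ⟨by rw [le_div_iff₀ hb, inv_mul_le_iff₀ hC]; exact hba, by rw [div_le_iff₀ hb]; exact hab⟩

theorem stmt_6_general
    {M : Type*} [MetricSpace M] [MeasurableSpace M]
    (μ : Measure M)
    (hVpos : ∀ (x : M) (r : ℝ), 0 < r → 0 < μ (ball x r))
    (hVfin : ∀ (x : M) (r : ℝ), 0 < r → μ (ball x r) < ⊤)
    -- volume comparability
    (ν ν' c₀ C₀ : ℝ) (hν' : 0 < ν') (hνν : ν' ≤ ν) (hc₀ : 0 < c₀) (hc₀C₀ : c₀ ≤ C₀)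
    (hdoub : ∀ (x : M) (r R : ℝ), 0 < r → r ≤ R →
        c₀ * (R/r) ^ ν' ≤ (μ (ball x R)).toReal / (μ (ball x r)).toReal ∧
        (μ (ball x R)).toReal / (μ (ball x r)).toReal ≤ C₀ * (R/r) ^ ν)
    (hcomp : ∀ (x y : M) (r : ℝ), 0 < r →
        (μ (ball x r)).toReal ≤ C₀ * (1 + dist x y / r) ^ ν * (μ (ball y r)).toReal)
    -- heat kernel with Li–Yau two-sided Gaussian estimate
    (h : ℝ → M → M → ℝ)
    (hhmeas : Measurable (fun p : ℝ × M × M => h p.1 p.2.1 p.2.2))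
    (c₁ C₁ c₂ C₂ : ℝ) (hc₁ : 0 < c₁) (hC₁ : 0 < C₁) (hc₂ : 0 < c₂) (hC₂ : 0 < C₂)
    (hLY : ∀ u : ℝ, 0 < u → ∀ x y : M,
        c₁ / (μ (ball y (Real.sqrt u))).toReal * Real.exp (-C₁ * (dist x y)^2 / u) ≤ h u x y ∧
        h u x y ≤ C₂ / (μ (ball y (Real.sqrt u))).toReal * Real.exp (-c₂ * (dist x y)^2 / u))
    (σ : ℝ) (hσ0 : 0 < σ) :
    ∃ C : ℝ, 1 ≤ C ∧ ∀ (t : ℝ), 0 < t → ∀ x y z : M, dist y z ≤ t →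
      C⁻¹ ≤ Qker h σ t x y / Qker h σ t x z ∧
      Qker h σ t x y / Qker h σ t x z ≤ C := by
  have hC₀ : 0 < C₀ := by linarith
  have hV : ∀ x r, 0 < r → 0 < μ.real (ball x r) := fun x r hr =>
    ENNReal.toReal_pos (hVpos x r hr).ne' (hVfin x r hr).ne
  have hdoub' : ∀ x r R, 0 < r → r ≤ R →
      μ.real (ball x R) ≤ C₀ * (R / r) ^ ν * μ.real (ball x r) :=
    fun x r R hr hrR => (div_le_iff₀ (hV x r hr)).1 (hdoub x r R hr hrR).2
  obtain ⟨K₁, K₂, hK₁, hK₂, hbounds⟩ := subordinationIntegral_comparable h hσ0 (by linarith) hC₀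
    hc₁ hC₁.le hc₂ hC₂.le hV hdoub' (fun x y => hhmeas.comp (measurable_prodMk_right (y := (x, y))))
    hLY
  set K := K₂ * (2 ^ (2 * σ) * (C₀ * 2 ^ ν) ^ 2) / K₁
  have hQ : ∀ t, 0 < t → ∀ x y z : M, dist y z ≤ t →
      0 < Qker h σ t x z ∧ Qker h σ t x y ≤ K * Qker h σ t x z := by
    intro t ht x y z hyz
    refine ⟨Qker_pos ht hσ0 ((mul_pos hK₁ (kernelProfile_pos (hV z) ht)).trans_le
      (hbounds t ht x z).1), Qker_le_mul_Qker ht hσ0 ?_⟩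
    calc subordinationIntegral h σ t x y ≤ K₂ * kernelProfile μ σ t x y := (hbounds t ht x y).2
      _ ≤ K₂ * (2 ^ (2 * σ) * (C₀ * 2 ^ ν) ^ 2 * kernelProfile μ σ t x z) := by
          gcongr
          exact kernelProfile_le_of_dist_le hσ0.le (by linarith) hC₀.le hV hdoub' hcomp ht hyz
      _ = K * (K₁ * kernelProfile μ σ t x z) := by simp only [K]; field_simp
      _ ≤ K * subordinationIntegral h σ t x z := by gcongr; exact (hbounds t ht x z).1
  refine ⟨max 1 K, le_max_left _ _, fun t ht x y z hyz => ?_⟩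
  obtain ⟨hz, hyz'⟩ := hQ t ht x y z hyz
  obtain ⟨hy, hzy'⟩ := hQ t ht x z y (by rwa [dist_comm])
  exact inv_le_div_and_div_le_of_le_mul hz (by positivity)
    (hyz'.trans (by gcongr; exact le_max_right _ _))
    (hzy'.trans (by gcongr; exact le_max_right _ _))

/-- comparability of the subordinated kernel at nearby base points:
if `d(y,z) ≤ t` then `C⁻¹ ≤ Q_t^σ(x,y)/Q_t^σ(x,z) ≤ C`. -/
theorem stmt_6
    {M : Type*} [MetricSpace M] [MeasurableSpace M] [BorelSpace M]
    (μ : Measure M)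
    (hVpos : ∀ (x : M) (r : ℝ), 0 < r → 0 < μ (ball x r))
    (hVfin : ∀ (x : M) (r : ℝ), 0 < r → μ (ball x r) < ⊤)
    -- volume comparability
    (ν ν' c₀ C₀ : ℝ) (hν' : 0 < ν') (hνν : ν' ≤ ν) (hc₀ : 0 < c₀) (hc₀C₀ : c₀ ≤ C₀)
    (hdoub : ∀ (x : M) (r R : ℝ), 0 < r → r ≤ R →
        c₀ * (R/r) ^ ν' ≤ (μ (ball x R)).toReal / (μ (ball x r)).toReal ∧
        (μ (ball x R)).toReal / (μ (ball x r)).toReal ≤ C₀ * (R/r) ^ ν)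
    (hcomp : ∀ (x y : M) (r : ℝ), 0 < r →
        (μ (ball x r)).toReal ≤ C₀ * (1 + dist x y / r) ^ ν * (μ (ball y r)).toReal)
    -- heat kernel with Li–Yau two-sided Gaussian estimate
    (h : ℝ → M → M → ℝ)
    (hhmeas : Measurable (fun p : ℝ × M × M => h p.1 p.2.1 p.2.2))
    (hhsym : ∀ u : ℝ, 0 < u → ∀ x y : M, h u x y = h u y x)
    (c₁ C₁ c₂ C₂ : ℝ) (hc₁ : 0 < c₁) (hC₁ : 0 < C₁) (hc₂ : 0 < c₂) (hC₂ : 0 < C₂)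
    (hLY : ∀ u : ℝ, 0 < u → ∀ x y : M,
        c₁ / (μ (ball y (Real.sqrt u))).toReal * Real.exp (-C₁ * (dist x y)^2 / u) ≤ h u x y ∧
        h u x y ≤ C₂ / (μ (ball y (Real.sqrt u))).toReal * Real.exp (-c₂ * (dist x y)^2 / u))
    (σ : ℝ) (hσ0 : 0 < σ) (hσ1 : σ < 1) :
    ∃ C : ℝ, 1 ≤ C ∧ ∀ (t : ℝ), 0 < t → ∀ x y z : M, dist y z ≤ t →
      C⁻¹ ≤ Qker h σ t x y / Qker h σ t x z ∧
      Qker h σ t x y / Qker h σ t x z ≤ C :=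
  stmt_6_general μ hVpos hVfin ν ν' c₀ C₀ hν' hνν hc₀ hc₀C₀ hdoub hcomp h hhmeas c₁ C₁ c₂ C₂ hc₁ hC₁
    hc₂ hC₂ hLY σ hσ0
end
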